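/- arXiv:2305.16229 — 3 statements merged into one kernel-verified Lean document; each statement's English description precedes it below -/
import Mathlib

section
/- Define f(γ) = (1/(1+σ₀²)) · ( ((σ₀²+γ)/(1+σ₀²+γ))² y² − σ₀² ) for γ > −(1+σ₀²). If σ₀² ≥ y² and γ, γ⋆ ∈ [−σ₀²/(1+σ₀²), 0] with f(γ⋆) = γ⋆, then |f(γ) − γ⋆| ≤ c(σ₀) · |γ − γ⋆| where c(σ₀) = max( (σ₀²/(1+σ₀²)) · 2σ₀²(σ₀²+1)²(σ₀⁶+3σ₀⁴+4σ₀²+1)/(σ₀⁴+σ₀²+1)⁴ , (σ₀²/(1+σ₀²)) · 2σ₀⁴(σ₀²+1)²·max(0, 1−σ₀⁴−σ₀²)/(σ₀⁴+σ₀²+1)⁴ ) < 1. -/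
lemma aux_key (s y γ γs : ℝ) (hs : 0 < s) (hy : y^2 ≤ s)
    (hγ1 : -s/(1+s) ≤ γ) (hγ2 : γ ≤ 0) (hq1 : -s/(1+s) ≤ γs) (hq2 : γs ≤ 0) :
    |(1/(1+s)) * (((s+γ)/(1+s+γ))^2 * y^2 - s) - (1/(1+s)) * (((s+γs)/(1+s+γs))^2 * y^2 - s)|
    ≤ ((s/(1+s)) * (2*s*(s+1)^2*(s^3+3*s^2+4*s+1)) / (s^2+s+1)^4) * |γ - γs| := by
  have ht : (0:ℝ) < 1 + s := by linarith
  have hγ1' : -s ≤ γ * (1+s) := by rwa [div_le_iff₀ ht] at hγ1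
  have hq1' : -s ≤ γs * (1+s) := by rwa [div_le_iff₀ ht] at hq1
  have ha : (s^2+s+1)/(1+s) ≤ 1+s+γ := by
    rw [div_le_iff₀ ht]; nlinarith [hγ1']
  have hb : (s^2+s+1)/(1+s) ≤ 1+s+γs := by
    rw [div_le_iff₀ ht]; nlinarith [hq1']
  have hL : (0:ℝ) < (s^2+s+1)/(1+s) := by positivity
  have ha0 : 0 < 1+s+γ := lt_of_lt_of_le hL ha
  have hb0 : 0 < 1+s+γs := lt_of_lt_of_le hL hb
  have haU : 1+s+γ ≤ 1+s := by linarith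
  have hbU : 1+s+γs ≤ 1+s := by linarith
  have hsγ : 0 ≤ s+γ := by nlinarith [hγ1', mul_nonneg hs.le (neg_nonneg.2 hγ2)]
  have hsq : 0 ≤ s+γs := by nlinarith [hq1', mul_nonneg hs.le (neg_nonneg.2 hq2)]
  have hsγU : s+γ ≤ s := by linarith
  have hsqU : s+γs ≤ s := by linarith
  have hid : (1/(1+s)) * (((s+γ)/(1+s+γ))^2 * y^2 - s) - (1/(1+s)) * (((s+γs)/(1+s+γs))^2 * y^2 - s)
      = ((y^2 * ((s+γ)*(1+s+γs) + (s+γs)*(1+s+γ))) / ((1+s) * ((1+s+γ)^2 * (1+s+γs)^2))) * (γ - γs) := by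
    field_simp
    ring
  rw [hid, abs_mul]
  have hM : 0 ≤ (s+γ)*(1+s+γs) + (s+γs)*(1+s+γ) :=
    add_nonneg (mul_nonneg hsγ hb0.le) (mul_nonneg hsq ha0.le)
  have hcoef0 : 0 ≤ (y^2 * ((s+γ)*(1+s+γs) + (s+γs)*(1+s+γ))) / ((1+s) * ((1+s+γ)^2 * (1+s+γs)^2)) := by
    apply div_nonneg (mul_nonneg (sq_nonneg y) hM) (by positivity)
  rw [abs_of_nonneg hcoef0]
  have hp : (0:ℝ) < s^2+s+1 := by positivity
  gcongr ?_ * _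
  calc (y^2 * ((s+γ)*(1+s+γs) + (s+γs)*(1+s+γ))) / ((1+s) * ((1+s+γ)^2 * (1+s+γs)^2))
      ≤ (s * (s*(1+s) + s*(1+s))) / ((1+s) * (((s^2+s+1)/(1+s))^2 * ((s^2+s+1)/(1+s))^2)) := by
        gcongr
      _ = 2*s^2*(1+s)^4 / (s^2+s+1)^4 := by
        rw [div_pow]
        field_simp
        ring
      _ ≤ (2*s^2*(s+1)*(s^3+3*s^2+4*s+1)) / (s^2+s+1)^4 := by
        gcongr ?_ / _
        nlinarith [mul_nonneg (mul_nonneg hs.le hs.le) hs.le, sq_nonneg s]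
      _ = (s/(1+s)) * (2*s*(s+1)^2*(s^3+3*s^2+4*s+1)) / (s^2+s+1)^4 := by
        field_simp
        ring

lemma c1_lt (s : ℝ) (hs : 0 < s) :
    (s/(1+s)) * (2*s*(s+1)^2*(s^3+3*s^2+4*s+1)) / (s^2+s+1)^4 < 1 := by
  have ht : (0:ℝ) < 1 + s := by linarith
  rw [div_lt_one (by positivity), div_mul_eq_mul_div, div_lt_iff₀ ht]
  nlinarith [pow_pos hs 8, pow_pos hs 7, pow_pos hs 6, pow_pos hs 5, pow_pos hs 4,
    pow_pos hs 3, pow_pos hs 2, hs, pow_pos hs 9]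

lemma c2_lt (s : ℝ) (hs : 0 < s) :
    (s/(1+s)) * (2*s^2*(s+1)^2* max 0 (1-s^2-s)) / (s^2+s+1)^4 < 1 := by
  have ht : (0:ℝ) < 1 + s := by linarith
  rcases le_or_gt (1-s^2-s) 0 with h | h
  · rw [max_eq_left h]
    have : (s/(1+s)) * (2*s^2*(s+1)^2*(0:ℝ)) / (s^2+s+1)^4 = 0 := by ring
    rw [this]; norm_num
  · rw [max_eq_right h.le]
    have hs1 : s < 1 := by nlinarith
    rw [div_lt_one (by positivity), div_mul_eq_mul_div, div_lt_iff₀ ht]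
    have hp1 : (1:ℝ) ≤ s^2+s+1 := by nlinarith
    calc s * (2*s^2*(s+1)^2*(1-s^2-s)) ≤ 2*s*(s+1)^2 := by
          nlinarith [mul_nonneg (sq_nonneg (s+1))
            (show (0:ℝ) ≤ s - s^3*(1-s^2-s) by nlinarith [pow_pos hs 4, pow_pos hs 5, mul_pos hs hs])]
      _ < (s^2+s+1)*(1+s) := by
          nlinarith [mul_pos ht h]
      _ ≤ (s^2+s+1)^4*(1+s) := by
          nlinarith [mul_nonneg (mul_nonneg (mul_nonneg
            (show (0:ℝ) ≤ s^2+s+1 by positivity)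
            (show (0:ℝ) ≤ s^2+s+1-1 by linarith))
            (show (0:ℝ) ≤ (s^2+s+1)^2+(s^2+s+1)+1 by positivity)) ht.le]

/-- Contraction estimate of Theorem 3 (scalar case): with
f(γ) = (1/(1+σ₀²))(((σ₀²+γ)/(1+σ₀²+γ))² y² − σ₀²), if σ₀² ≥ y²,
γ, γ⋆ ∈ [−σ₀²/(1+σ₀²), 0] and f(γ⋆) = γ⋆, then
|f(γ) − γ⋆| ≤ c(σ₀)·|γ − γ⋆| with c(σ₀) < 1 given explicitly. -/
theorem contraction_estimate (σ₀ y : ℝ) (hσ : σ₀ > 0) (hy : y ^ 2 ≤ σ₀ ^ 2)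
    (f : ℝ → ℝ)
    (hf : ∀ γ : ℝ, γ > -(1 + σ₀ ^ 2) →
      f γ = (1 / (1 + σ₀ ^ 2)) *
        (((σ₀ ^ 2 + γ) / (1 + σ₀ ^ 2 + γ)) ^ 2 * y ^ 2 - σ₀ ^ 2))
    (γ γs : ℝ)
    (hγ : γ ∈ Set.Icc (-σ₀ ^ 2 / (1 + σ₀ ^ 2)) 0)
    (hγs : γs ∈ Set.Icc (-σ₀ ^ 2 / (1 + σ₀ ^ 2)) 0)
    (hfix : f γs = γs) :
    |f γ - γs| ≤
      max
        ((σ₀ ^ 2 / (1 + σ₀ ^ 2)) *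
          (2 * σ₀ ^ 2 * (σ₀ ^ 2 + 1) ^ 2 * (σ₀ ^ 6 + 3 * σ₀ ^ 4 + 4 * σ₀ ^ 2 + 1))
          / (σ₀ ^ 4 + σ₀ ^ 2 + 1) ^ 4)
        ((σ₀ ^ 2 / (1 + σ₀ ^ 2)) *
          (2 * σ₀ ^ 4 * (σ₀ ^ 2 + 1) ^ 2 * max 0 (1 - σ₀ ^ 4 - σ₀ ^ 2))
          / (σ₀ ^ 4 + σ₀ ^ 2 + 1) ^ 4)
      * |γ - γs|
    ∧
    max
        ((σ₀ ^ 2 / (1 + σ₀ ^ 2)) *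
          (2 * σ₀ ^ 2 * (σ₀ ^ 2 + 1) ^ 2 * (σ₀ ^ 6 + 3 * σ₀ ^ 4 + 4 * σ₀ ^ 2 + 1))
          / (σ₀ ^ 4 + σ₀ ^ 2 + 1) ^ 4)
        ((σ₀ ^ 2 / (1 + σ₀ ^ 2)) *
          (2 * σ₀ ^ 4 * (σ₀ ^ 2 + 1) ^ 2 * max 0 (1 - σ₀ ^ 4 - σ₀ ^ 2))
          / (σ₀ ^ 4 + σ₀ ^ 2 + 1) ^ 4) < 1 := by
  obtain ⟨hγ1, hγ2⟩ := hγ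
  obtain ⟨hq1, hq2⟩ := hγs
  set s : ℝ := σ₀ ^ 2 with hsdef
  have hs : 0 < s := by positivity
  have ht : (0:ℝ) < 1 + s := by linarith
  have h4 : σ₀ ^ 4 = s ^ 2 := by rw [hsdef]; ring
  have h6 : σ₀ ^ 6 = s ^ 3 := by rw [hsdef]; ring
  rw [h4, h6]
  -- identify the two branches with the canonical forms
  have hc1eq : (s / (1 + s)) * (2 * s * (s + 1) ^ 2 * (s ^ 3 + 3 * s ^ 2 + 4 * s + 1))
      / (s ^ 2 + s + 1) ^ 4
      = (s/(1+s)) * (2*s*(s+1)^2*(s^3+3*s^2+4*s+1)) / (s^2+s+1)^4 := by ring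
  have hc2eq : (s / (1 + s)) * (2 * s ^ 2 * (s + 1) ^ 2 * max 0 (1 - s ^ 2 - s))
      / (s ^ 2 + s + 1) ^ 4
      = (s/(1+s)) * (2*s^2*(s+1)^2* max 0 (1-s^2-s)) / (s^2+s+1)^4 := by ring
  have hγgt : γ > -(1 + s) := by nlinarith [(div_le_iff₀ ht).mp hγ1]
  have hqgt : γs > -(1 + s) := by nlinarith [(div_le_iff₀ ht).mp hq1]
  constructor
  · have key := aux_key s y γ γs hs hy hγ1 hγ2 hq1 hq2
    have hdiff : f γ - γs = (1/(1+s)) * (((s+γ)/(1+s+γ))^2 * y^2 - s)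
        - (1/(1+s)) * (((s+γs)/(1+s+γs))^2 * y^2 - s) := by
      rw [← hf γ hγgt, ← hf γs hqgt, hfix]
    rw [hdiff]
    refine key.trans ?_
    apply mul_le_mul_of_nonneg_right _ (abs_nonneg _)
    rw [hc1eq]
    exact le_max_left _ _
  · apply max_lt
    · rw [hc1eq]; exact c1_lt s hs
    · rw [hc2eq]; exact c2_lt s hs
end

section
/- Let σ₀ > 0, y ∈ ℝ with y² ≤ σ₀², and let f(γ) = (1/(1+σ₀²))·( ((σ₀²+γ)/(1+σ₀²+γ))² y² − σ₀² ). Then the sequence γ_0 = 0, γ_{j+1} = f(γ_j) converges to a fixed point γ⋆ of f in [−σ₀²/(1+σ₀²), 0]. -/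
open Filter

/-- Scalar version of Theorem 3: the iteration γ₀ = 0, γ_{j+1} = f(γ_j) with
f(γ) = (1/(1+σ₀²))(((σ₀²+γ)/(1+σ₀²+γ))² y² − σ₀²) converges to a fixed
point γ⋆ of f in [−σ₀²/(1+σ₀²), 0], provided y² ≤ σ₀². -/
theorem prior_iteration_converges (σ₀ y : ℝ) (hσ : σ₀ > 0) (hy : y ^ 2 ≤ σ₀ ^ 2)
    (f : ℝ → ℝ)
    (hf : ∀ γ : ℝ, f γ = (1 / (1 + σ₀ ^ 2)) *
        (((σ₀ ^ 2 + γ) / (1 + σ₀ ^ 2 + γ)) ^ 2 * y ^ 2 - σ₀ ^ 2))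
    (g : ℕ → ℝ) (h0 : g 0 = 0) (hrec : ∀ j, g (j + 1) = f (g j)) :
    ∃ γs ∈ Set.Icc (-σ₀ ^ 2 / (1 + σ₀ ^ 2)) (0 : ℝ),
      f γs = γs ∧ Tendsto g atTop (nhds γs) := by
  set s := σ₀ ^ 2 with hsdef
  have hs0 : 0 < s := by positivity
  set a := 1 + s with hadef
  have ha : 0 < a := by linarith
  have hy0 : 0 ≤ y ^ 2 := sq_nonneg y
  -- basic facts on the interval
  have hnum : ∀ γ : ℝ, γ ∈ Set.Icc (-s / a) 0 → 0 ≤ s + γ := by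
    rintro γ ⟨h1, h2⟩
    have hga : -s ≤ γ * a := (div_le_iff₀ ha).mp h1
    nlinarith [mul_nonpos_of_nonpos_of_nonneg h2 hs0.le]
  have hden : ∀ γ : ℝ, γ ∈ Set.Icc (-s / a) 0 → 0 < a + γ := by
    intro γ hγ
    have := hnum γ hγ
    nlinarith
  -- f maps the interval into itself
  have hmap : ∀ γ : ℝ, γ ∈ Set.Icc (-s / a) 0 → f γ ∈ Set.Icc (-s / a) 0 := by
    intro γ hγ
    obtain ⟨h1, h2⟩ := hγ
    have hn := hnum γ ⟨h1, h2⟩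
    have hd := hden γ ⟨h1, h2⟩
    have hr0 : 0 ≤ (s + γ) / (a + γ) := div_nonneg hn hd.le
    have hr1 : (s + γ) / (a + γ) ≤ 1 := by
      rw [div_le_one hd]; linarith
    have hX0 : 0 ≤ ((s + γ) / (a + γ)) ^ 2 * y ^ 2 := by positivity
    have hXs : ((s + γ) / (a + γ)) ^ 2 * y ^ 2 ≤ s := by
      have h2' : ((s + γ) / (a + γ)) ^ 2 ≤ 1 := by nlinarith
      nlinarith
    rw [hf]
    constructor
    · rw [neg_div, div_eq_inv_mul, ← one_div]
      have : -s ≤ ((s + γ) / (a + γ)) ^ 2 * y ^ 2 - s := by linarith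
      nlinarith [one_div_pos.mpr ha, mul_le_mul_of_nonneg_left this (one_div_pos.mpr ha).le]
    · have : ((s + γ) / (a + γ)) ^ 2 * y ^ 2 - s ≤ 0 := by linarith
      nlinarith [one_div_pos.mpr ha]
  -- f is monotone on the interval
  have hmono : ∀ x y' : ℝ, x ∈ Set.Icc (-s / a) 0 → y' ∈ Set.Icc (-s / a) 0 →
      x ≤ y' → f x ≤ f y' := by
    intro x y' hx hy' hxy
    have hnx := hnum x hx
    have hny := hnum y' hy'
    have hdx := hden x hx
    have hdy := hden y' hy'
    have hcross : (s + x) * (a + y') ≤ (s + y') * (a + x) := by nlinarith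
    have hrat : (s + x) / (a + x) ≤ (s + y') / (a + y') :=
      (div_le_div_iff₀ hdx hdy).mpr hcross
    have hrx : 0 ≤ (s + x) / (a + x) := div_nonneg hnx hdx.le
    have hsq : ((s + x) / (a + x)) ^ 2 ≤ ((s + y') / (a + y')) ^ 2 := by nlinarith
    rw [hf, hf]
    have h1a : 0 < 1 / a := one_div_pos.mpr ha
    nlinarith [mul_le_mul_of_nonneg_right hsq hy0,
      mul_le_mul_of_nonneg_left
        (sub_le_sub_right (mul_le_mul_of_nonneg_right hsq hy0) s) h1a.le]
  -- the iterates stay in the interval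
  have hI0 : (0 : ℝ) ∈ Set.Icc (-s / a) 0 := by
    exact ⟨div_nonpos_of_nonpos_of_nonneg (by linarith) ha.le, le_refl 0⟩
  have hgI : ∀ j, g j ∈ Set.Icc (-s / a) 0 := by
    intro j
    induction j with
    | zero => rw [h0]; exact hI0
    | succ j ih => rw [hrec]; exact hmap _ ih
  -- the iterates are decreasing
  have hdec : ∀ j, g (j + 1) ≤ g j := by
    intro j
    induction j with
    | zero =>
      rw [hrec, h0]
      exact (hmap 0 hI0).2
    | succ j ih =>
      calc g (j + 1 + 1) = f (g (j + 1)) := hrec _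
        _ ≤ f (g j) := hmono _ _ (hgI (j + 1)) (hgI j) ih
        _ = g (j + 1) := (hrec j).symm
  have hant : Antitone g := antitone_nat_of_succ_le hdec
  have hbdd : BddBelow (Set.range g) := ⟨-s / a, by rintro x ⟨j, rfl⟩; exact (hgI j).1⟩
  set γs := ⨅ j, g j with hγsdef
  have htend : Tendsto g atTop (nhds γs) := tendsto_atTop_ciInf hant hbdd
  have hγs_mem : γs ∈ Set.Icc (-s / a) 0 := by
    constructor
    · exact le_ciInf fun j => (hgI j).1
    · calc γs ≤ g 0 := ciInf_le hbdd 0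
        _ = 0 := h0
  -- continuity of f at γs
  have hdγ : a + γs ≠ 0 := (hden γs hγs_mem).ne'
  have hfe : f = fun γ => 1 / a * (((s + γ) / (a + γ)) ^ 2 * y ^ 2 - s) := funext hf
  have hcont : ContinuousAt f γs := by
    rw [hfe]
    have c1 : ContinuousAt (fun γ : ℝ => s + γ) γs := by fun_prop
    have c2 : ContinuousAt (fun γ : ℝ => a + γ) γs := by fun_prop
    exact (((((c1.div c2 hdγ).pow 2).mul continuousAt_const).sub
      continuousAt_const).const_mul _)
  -- the limit is a fixed point
  have hfix : f γs = γs := by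
    have h1 : Tendsto (fun j => g (j + 1)) atTop (nhds γs) :=
      htend.comp (tendsto_add_atTop_nat 1)
    have h2 : Tendsto (fun j => f (g j)) atTop (nhds (f γs)) :=
      hcont.tendsto.comp htend
    have h3 : Tendsto (fun j => g (j + 1)) atTop (nhds (f γs)) := by
      simpa only [hrec] using h2
    exact tendsto_nhds_unique h3 h1
  exact ⟨γs, hγs_mem, hfix, htend⟩
end

section
/- If γ_j ∈ [−σ₀²/(1+σ₀²), 0] and γ⋆ ∈ [−σ₀²/(1+σ₀²), 0] and y² ≤ σ₀², then the factor a = (y²/(1+σ₀²)) · (γ_j + γ⋆ + 2(σ₀² + σ₀²γ_j + σ₀²γ⋆ + γ_jγ⋆ + σ₀⁴)) / ((1+σ₀²+γ_j)²(1+σ₀²+γ⋆)²) satisfies −1 < a < 1. -/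
set_option maxHeartbeats 1000000

/-- The contraction factor a satisfies −1 < a < 1 (Theorem 3). -/
theorem contraction_factor_bounds (σ₀ y γj γs : ℝ) (hσ : σ₀ > 0)
    (hγj : γj ∈ Set.Icc (-σ₀ ^ 2 / (1 + σ₀ ^ 2)) (0 : ℝ))
    (hγs : γs ∈ Set.Icc (-σ₀ ^ 2 / (1 + σ₀ ^ 2)) (0 : ℝ))
    (hy : y ^ 2 ≤ σ₀ ^ 2) :
    -1 < (y ^ 2 / (1 + σ₀ ^ 2)) *
        (γj + γs + 2 * (σ₀ ^ 2 + σ₀ ^ 2 * γj + σ₀ ^ 2 * γs + γj * γs + σ₀ ^ 4))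
        / ((1 + σ₀ ^ 2 + γj) ^ 2 * (1 + σ₀ ^ 2 + γs) ^ 2)
    ∧ (y ^ 2 / (1 + σ₀ ^ 2)) *
        (γj + γs + 2 * (σ₀ ^ 2 + σ₀ ^ 2 * γj + σ₀ ^ 2 * γs + γj * γs + σ₀ ^ 4))
        / ((1 + σ₀ ^ 2 + γj) ^ 2 * (1 + σ₀ ^ 2 + γs) ^ 2) < 1 := by
  obtain ⟨hj1, hj2⟩ := hγj
  obtain ⟨hs1, hs2⟩ := hγs
  set s := σ₀ ^ 2 with hsdef
  have hs : 0 < s := by positivity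
  have h1s : (0:ℝ) < 1 + s := by linarith
  have hj1' : -s ≤ (1 + s) * γj := by
    rw [div_le_iff₀ h1s] at hj1; linarith [hj1]
  have hs1' : -s ≤ (1 + s) * γs := by
    rw [div_le_iff₀ h1s] at hs1; linarith [hs1]
  -- u := 1+s+γj ≥ 1, v := 1+s+γs ≥ 1
  have hu : (1:ℝ) ≤ 1 + s + γj := by nlinarith [sq_nonneg s]
  have hv : (1:ℝ) ≤ 1 + s + γs := by nlinarith [sq_nonneg s]
  have hu0 : (0:ℝ) < 1 + s + γj := by linarith
  have hv0 : (0:ℝ) < 1 + s + γs := by linarith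
  have hD : (0:ℝ) < (1 + s + γj) ^ 2 * (1 + s + γs) ^ 2 := by positivity
  have hy0 : (0:ℝ) ≤ y ^ 2 := sq_nonneg y
  -- N rewritten: N = 2uv - u - v ≥ 0
  have hN : 0 ≤ γj + γs + 2 * (s + s * γj + s * γs + γj * γs + s ^ 2) := by
    nlinarith [mul_nonneg (sub_nonneg.2 hu) (sub_nonneg.2 hv)]
  have hσ4 : σ₀ ^ 4 = s ^ 2 := by rw [hsdef]; ring
  rw [hσ4]
  clear hσ4 hsdef hj1 hs1
  clear_value s
  constructor
  · have : (0:ℝ) ≤ (y ^ 2 / (1 + s)) *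
        (γj + γs + 2 * (s + s * γj + s * γs + γj * γs + s ^ 2))
        / ((1 + s + γj) ^ 2 * (1 + s + γs) ^ 2) := by positivity
    linarith
  · rw [div_lt_one hD, div_mul_eq_mul_div, div_lt_iff₀ h1s]
    have hC1 : 1 + s + s ^ 2 ≤ (1 + s) * (1 + s + γj) := by nlinarith
    have hC2 : 1 + s + s ^ 2 ≤ (1 + s) * (1 + s + γs) := by nlinarith
    have hQ : (0:ℝ) < 1 + s + s ^ 2 := by positivity
    have hP : (1 + s + s ^ 2) ^ 2 ≤ (1 + s) ^ 2 * ((1 + s + γj) * (1 + s + γs)) := by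
      nlinarith [mul_le_mul hC1 hC2 hQ.le (by positivity)]
    have hPpos : (0:ℝ) < (1 + s + γj) * (1 + s + γs) := mul_pos hu0 hv0
    have hD2 : 2 * s * (1 + s) < (1 + s + s ^ 2) ^ 2 := by nlinarith [pow_pos hs 3, pow_pos hs 2, pow_pos hs 4]
    have hkey : 2 * s * ((1 + s + γj) * (1 + s + γs)) <
        (1 + s + γj) ^ 2 * (1 + s + γs) ^ 2 * (1 + s) := by
      nlinarith [mul_le_mul_of_nonneg_left hP hPpos.le,
        mul_lt_mul_of_pos_left hD2 (mul_pos h1s hPpos)]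
    have hA : y ^ 2 * (γj + γs + 2 * (s + s * γj + s * γs + γj * γs + s ^ 2)) ≤
        s * (γj + γs + 2 * (s + s * γj + s * γs + γj * γs + s ^ 2)) :=
      mul_le_mul_of_nonneg_right hy hN
    nlinarith [hA, hkey, mul_le_mul_of_nonneg_left (show γj + γs + 2 * (s + s * γj + s * γs + γj * γs + s ^ 2) ≤ 2 * ((1 + s + γj) * (1 + s + γs)) by nlinarith) hs.le]
end
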